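/- arXiv:1512.01179 — 3 statements merged into one kernel-verified Lean document; each statement's English description precedes it below -/
import Mathlib

section
/- Let f ∈ L¹(ℝ) or f ∈ L^∞(ℝ), and suppose that at some x₀ ∈ ℝ both one-sided limits f(x₀−) = lim_{x→x₀⁻} f(x) and f(x₀+) = lim_{x→x₀⁺} f(x) exist. Then lim_{θ→0⁺} (P_θ * f)(x₀) = (f(x₀+) + f(x₀−))/2, where P_θ is the Poisson kernel. -/
/-!
The kernels `P_θ` are even, have mass one, and concentrate at `0` as `θ → 0⁺`, so each half-line
carries mass `1/2` in the limit; in `∫ P_θ(y) f(x₀ - y) dy` the half-line `y > 0` sees `f(x₀-)`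
and `y < 0` sees `f(x₀+)`. For integrable `f` this is the peak-function theorem on each half-line.
A bounded `f` is split into an integrable piece supported near `x₀` and a bounded piece vanishing
near `x₀`, whose contribution is at most `‖f‖_∞` times the mass of `P_θ` off `(-1, 1)`,
that is `‖f‖_∞ (1 - 2 arctan(1/θ)/π) → 0`.
-/

open MeasureTheory Filter Topology Real

/-- The Poisson kernel on `ℝ`: `P θ t = θ / (π (θ² + t²))`. -/
noncomputable def poissonKernelℝ (θ t : ℝ) : ℝ := θ / (π * (θ ^ 2 + t ^ 2))

open Set

section Kernel

variable {θ : ℝ}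

lemma poissonKernelℝ_nonneg (hθ : 0 ≤ θ) (y : ℝ) : 0 ≤ poissonKernelℝ θ y := by
  unfold poissonKernelℝ; positivity

lemma poissonKernelℝ_neg (y : ℝ) : poissonKernelℝ θ (-y) = poissonKernelℝ θ y := by
  simp [poissonKernelℝ]

lemma poissonKernelℝ_eq (hθ : θ ≠ 0) (y : ℝ) :
    poissonKernelℝ θ y = (π * θ)⁻¹ * (1 + (y / θ) ^ 2)⁻¹ := by
  unfold poissonKernelℝ
  field_simp

lemma poissonKernelℝ_le (hθ : 0 < θ) (y : ℝ) : poissonKernelℝ θ y ≤ (π * θ)⁻¹ := by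
  rw [poissonKernelℝ_eq hθ.ne']
  exact mul_le_of_le_one_right (by positivity) (inv_le_one_of_one_le₀ (by nlinarith))

lemma poissonKernelℝ_le_of_le_abs (hθ : 0 < θ) {ε y : ℝ} (hε : 0 < ε) (hy : ε ≤ |y|) :
    poissonKernelℝ θ y ≤ θ / (π * ε ^ 2) := by
  unfold poissonKernelℝ
  gcongr
  nlinarith [sq_abs y, abs_nonneg y]

lemma continuous_poissonKernelℝ (hθ : 0 < θ) : Continuous (poissonKernelℝ θ) :=
  continuous_const.div (by fun_prop) fun y ↦ by positivity

lemma integrable_poissonKernelℝ (hθ : 0 < θ) : Integrable (poissonKernelℝ θ) := by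
  simp_rw [funext (poissonKernelℝ_eq hθ.ne')]
  exact (integrable_inv_one_add_sq.comp_div hθ.ne').const_mul _

lemma integral_poissonKernelℝ (hθ : 0 < θ) : ∫ y, poissonKernelℝ θ y = 1 := by
  simp_rw [poissonKernelℝ_eq hθ.ne', integral_const_mul,
    Measure.integral_comp_div (fun y ↦ (1 + y ^ 2)⁻¹), integral_univ_inv_one_add_sq,
    abs_of_pos hθ, smul_eq_mul]
  field_simp

lemma memLp_top_poissonKernelℝ (hθ : 0 < θ) : MemLp (poissonKernelℝ θ) ⊤ :=
  memLp_top_of_bound (continuous_poissonKernelℝ hθ).aestronglyMeasurable _ <|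
    .of_forall fun y ↦ by
      rw [Real.norm_of_nonneg (poissonKernelℝ_nonneg hθ.le y)]
      exact poissonKernelℝ_le hθ y

lemma hasDerivAt_arctan_div_div_pi (hθ : 0 < θ) (y : ℝ) :
    HasDerivAt (fun t ↦ arctan (t / θ) / π) (poissonKernelℝ θ y) y := by
  refine (((hasDerivAt_id' y).div_const θ).arctan.div_const π).congr_deriv ?_
  rw [poissonKernelℝ_eq hθ.ne']
  field_simp

lemma intervalIntegral_poissonKernelℝ (hθ : 0 < θ) (a b : ℝ) :
    ∫ y in a..b, poissonKernelℝ θ y = arctan (b / θ) / π - arctan (a / θ) / π :=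
  intervalIntegral.integral_eq_sub_of_hasDerivAt (fun y _ ↦ hasDerivAt_arctan_div_div_pi hθ y)
    ((continuous_poissonKernelℝ hθ).intervalIntegrable a b)

end Kernel

section Limits

variable {r : ℝ}

lemma tendsto_arctan_div_div_pi_nhdsGT_zero (hr : 0 < r) :
    Tendsto (fun θ ↦ arctan (r / θ) / π) (𝓝[>] 0) (𝓝 2⁻¹) := by
  have h : Tendsto (fun θ : ℝ ↦ r / θ) (𝓝[>] 0) atTop := by
    simpa only [div_eq_mul_inv] using tendsto_inv_nhdsGT_zero.const_mul_atTop hr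
  have := ((tendsto_arctan_atTop.mono_right nhdsWithin_le_nhds).comp h).div_const π
  rwa [show π / 2 / π = 2⁻¹ by field_simp] at this

lemma tendsto_setIntegral_Ioc_poissonKernelℝ (hr : 0 < r) :
    Tendsto (fun θ ↦ ∫ y in Ioc 0 r, poissonKernelℝ θ y) (𝓝[>] 0) (𝓝 2⁻¹) := by
  refine (tendsto_arctan_div_div_pi_nhdsGT_zero hr).congr' ?_
  filter_upwards [self_mem_nhdsWithin] with θ hθ
  rw [← intervalIntegral.integral_of_le hr.le, intervalIntegral_poissonKernelℝ hθ]
  simp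

lemma tendsto_setIntegral_compl_Ioo_poissonKernelℝ (hr : 0 < r) :
    Tendsto (fun θ ↦ ∫ y in (Ioo (-r) r)ᶜ, poissonKernelℝ θ y) (𝓝[>] 0) (𝓝 0) := by
  have h := ((tendsto_arctan_div_div_pi_nhdsGT_zero hr).const_mul 2).const_sub 1
  rw [show (1 : ℝ) - 2 * 2⁻¹ = 0 by norm_num] at h
  refine h.congr' ?_
  filter_upwards [self_mem_nhdsWithin] with θ hθ
  rw [setIntegral_compl measurableSet_Ioo (integrable_poissonKernelℝ hθ),
    integral_poissonKernelℝ hθ, ← integral_Ioc_eq_integral_Ioo,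
    ← intervalIntegral.integral_of_le (by linarith), intervalIntegral_poissonKernelℝ hθ,
    neg_div, arctan_neg]
  ring

lemma tendstoUniformlyOn_const_mul_poissonKernelℝ (c : ℝ) {ε : ℝ} (hε : 0 < ε) :
    TendstoUniformlyOn (fun θ y ↦ c * poissonKernelℝ θ y) 0 (𝓝[>] 0) {y | ε ≤ |y|} := by
  rw [Metric.tendstoUniformlyOn_iff]
  intro δ hδ
  have hbound : Tendsto (fun θ ↦ |c| * (θ / (π * ε ^ 2))) (𝓝[>] 0) (𝓝 0) := by
    have := ((continuous_id.div_const (π * ε ^ 2)).const_mul |c|).tendsto' 0 0 (by simp)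
    exact this.mono_left nhdsWithin_le_nhds
  filter_upwards [self_mem_nhdsWithin, hbound.eventually (gt_mem_nhds hδ)] with θ hθ hθδ y hy
  rw [Pi.zero_apply, dist_zero_left, norm_mul,
    Real.norm_of_nonneg (poissonKernelℝ_nonneg hθ.le y)]
  exact (mul_le_mul_of_nonneg_left (poissonKernelℝ_le_of_le_abs hθ hε hy)
    (abs_nonneg c)).trans_lt hθδ

end Limits

section Convolution

variable {E : Type*} [NormedAddCommGroup E] [NormedSpace ℝ E]

lemma integral_smul_eq_setIntegral_Ioi_of_even {φ : ℝ → ℝ} (hφ : ∀ y, φ (-y) = φ y)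
    {g : ℝ → E} (hg : Integrable fun y ↦ φ y • g y) :
    ∫ y, φ y • g y = ∫ y in Ioi 0, φ y • (g y + g (-y)) := by
  have hneg : Integrable fun y ↦ φ y • g (-y) := by simpa [hφ] using hg.comp_neg
  rw [← intervalIntegral.integral_Iic_add_Ioi hg.integrableOn hg.integrableOn, add_comm]
  simp_rw [smul_add]
  rw [integral_add hg.integrableOn hneg.integrableOn]
  congr 1
  simpa [hφ] using (integral_comp_neg_Ioi 0 fun y ↦ φ y • g y).symm

lemma tendsto_integral_poissonKernelℝ_smul_of_eqOn_zero {g : ℝ → E} {r : ℝ} (hr : 0 < r)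
    (hg : MemLp g ⊤) (hg₀ : EqOn g 0 (Ioo (-r) r)) :
    Tendsto (fun θ ↦ ∫ y, poissonKernelℝ θ y • g y) (𝓝[>] 0) (𝓝 0) := by
  set M := lpNorm g ⊤ volume
  have hM := (tendsto_setIntegral_compl_Ioo_poissonKernelℝ hr).const_mul M
  rw [mul_zero] at hM
  refine squeeze_zero_norm' ?_ hM
  filter_upwards [self_mem_nhdsWithin] with θ hθ
  rw [← integral_const_mul, ← integral_indicator measurableSet_Ioo.compl]
  refine norm_integral_le_of_norm_le
    (((integrable_poissonKernelℝ hθ).const_mul M).indicator measurableSet_Ioo.compl) ?_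
  filter_upwards [ae_le_lpNorm_exponent_top hg] with y hy
  by_cases hys : y ∈ Ioo (-r) r
  · simp [hg₀ hys, hys]
  · rw [indicator_of_mem hys, norm_smul, Real.norm_of_nonneg (poissonKernelℝ_nonneg hθ.le y),
      mul_comm]
    exact mul_le_mul_of_nonneg_right hy (poissonKernelℝ_nonneg hθ.le y)

variable [CompleteSpace E]

lemma tendsto_setIntegral_Ioi_poissonKernelℝ_smul {g : ℝ → E} {a : E}
    (hg : IntegrableOn g (Ioi 0)) (hga : Tendsto g (𝓝[>] 0) (𝓝 a)) :
    Tendsto (fun θ ↦ ∫ y in Ioi 0, poissonKernelℝ θ y • g y) (𝓝[>] 0) (𝓝 ((2 : ℝ)⁻¹ • a)) := by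
  have h₂ : Tendsto (fun θ ↦ ∫ y in Ioi 0, (2 * poissonKernelℝ θ y) • g y) (𝓝[>] 0) (𝓝 a) := by
    refine tendsto_setIntegral_peak_smul_of_integrableOn_of_tendsto measurableSet_Ioi
      measurableSet_Ioc Ioc_subset_Ioi_self (Ioc_mem_nhdsGT zero_lt_one) (by simp) ?_ ?_ ?_ ?_
      hg hga
    · filter_upwards [self_mem_nhdsWithin] with θ hθ y _
      exact mul_nonneg zero_le_two (poissonKernelℝ_nonneg (le_of_lt hθ) y)
    · intro u hu h0u
      obtain ⟨ε, hε, hball⟩ := Metric.isOpen_iff.mp hu 0 h0u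
      refine (tendstoUniformlyOn_const_mul_poissonKernelℝ 2 hε).mono fun y hy ↦ ?_
      simpa [Real.dist_eq] using mt (@hball y) hy.2
    · simp_rw [integral_const_mul]
      simpa using (tendsto_setIntegral_Ioc_poissonKernelℝ zero_lt_one).const_mul 2
    · filter_upwards [self_mem_nhdsWithin] with θ hθ
      exact (continuous_const.mul (continuous_poissonKernelℝ hθ)).aestronglyMeasurable
  refine (h₂.const_smul (2 : ℝ)⁻¹).congr fun θ ↦ ?_
  rw [← integral_smul]
  simp_rw [smul_smul, ← mul_assoc]
  norm_num

lemma tendsto_integral_poissonKernelℝ_smul_of_integrable {g : ℝ → E} {a b : E}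
    (hg : Integrable g) (ha : Tendsto g (𝓝[>] 0) (𝓝 a)) (hb : Tendsto g (𝓝[<] 0) (𝓝 b)) :
    Tendsto (fun θ ↦ ∫ y, poissonKernelℝ θ y • g y) (𝓝[>] 0) (𝓝 ((2 : ℝ)⁻¹ • (a + b))) := by
  have hb' : Tendsto (fun y ↦ g (-y)) (𝓝[>] 0) (𝓝 b) :=
    hb.comp (by simpa using tendsto_neg_nhdsGT (a := (0 : ℝ)))
  refine (tendsto_setIntegral_Ioi_poissonKernelℝ_smul (hg.add hg.comp_neg).integrableOn
    (ha.add hb')).congr' ?_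
  filter_upwards [self_mem_nhdsWithin] with θ hθ
  exact (integral_smul_eq_setIntegral_Ioi_of_even poissonKernelℝ_neg
    (hg.smul_of_top_right (memLp_top_poissonKernelℝ hθ))).symm

lemma tendsto_integral_poissonKernelℝ_smul_of_memLp_top {g : ℝ → E} {a b : E}
    (hg : MemLp g ⊤) (ha : Tendsto g (𝓝[>] 0) (𝓝 a)) (hb : Tendsto g (𝓝[<] 0) (𝓝 b)) :
    Tendsto (fun θ ↦ ∫ y, poissonKernelℝ θ y • g y) (𝓝[>] 0) (𝓝 ((2 : ℝ)⁻¹ • (a + b))) := by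
  set s := Ioo (-1 : ℝ) 1
  have hnear : s.indicator g =ᶠ[𝓝 0] g := by
    filter_upwards [Ioo_mem_nhds neg_one_lt_zero zero_lt_one] with y hy
    exact indicator_of_mem hy g
  have hnear_int : Integrable (s.indicator g) :=
    (integrable_indicator_iff measurableSet_Ioo).mpr ((hg.restrict s).integrable le_top)
  have hfar_mem : MemLp (sᶜ.indicator g) ⊤ := hg.indicator measurableSet_Ioo.compl
  have hlim := (tendsto_integral_poissonKernelℝ_smul_of_integrable hnear_int
    (ha.congr' (hnear.filter_mono nhdsWithin_le_nhds).symm)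
    (hb.congr' (hnear.filter_mono nhdsWithin_le_nhds).symm)).add
    (tendsto_integral_poissonKernelℝ_smul_of_eqOn_zero zero_lt_one hfar_mem
      fun y hy ↦ indicator_of_notMem (notMem_compl_iff.mpr hy) g)
  rw [add_zero] at hlim
  refine hlim.congr' ?_
  filter_upwards [self_mem_nhdsWithin] with θ hθ
  have hnear_smul : Integrable fun y ↦ poissonKernelℝ θ y • s.indicator g y :=
    hnear_int.smul_of_top_right (memLp_top_poissonKernelℝ hθ)
  have hfar_smul : Integrable fun y ↦ poissonKernelℝ θ y • sᶜ.indicator g y :=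
    (integrable_poissonKernelℝ hθ).smul_of_top_left hfar_mem
  rw [← integral_add hnear_smul hfar_smul]
  simp_rw [← smul_add, indicator_self_add_compl_apply]

end Convolution

lemma tendsto_const_sub_nhdsGT_zero (x : ℝ) : Tendsto (x - ·) (𝓝[>] 0) (𝓝[<] x) :=
  tendsto_nhdsWithin_iff.mpr
    ⟨((continuous_sub_left x).tendsto' 0 x (sub_zero x)).mono_left nhdsWithin_le_nhds,
      eventually_nhdsWithin_of_forall fun _ hy ↦ sub_lt_self x hy⟩

lemma tendsto_const_sub_nhdsLT_zero (x : ℝ) : Tendsto (x - ·) (𝓝[<] 0) (𝓝[>] x) :=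
  tendsto_nhdsWithin_iff.mpr
    ⟨((continuous_sub_left x).tendsto' 0 x (sub_zero x)).mono_left nhdsWithin_le_nhds,
      eventually_nhdsWithin_of_forall fun y (hy : y < 0) ↦ show x < x - y by linarith⟩

/-- If `f ∈ L¹(ℝ)` or `f ∈ L^∞(ℝ)` and both one-sided limits `f(x₀-)` and `f(x₀+)` exist
at `x₀`, then `(P_θ * f)(x₀) → (f(x₀+) + f(x₀-))/2` as `θ → 0⁺`. -/
theorem poisson_fejer (f : ℝ → ℂ)
    (hf : Integrable f volume ∨ MemLp f ⊤ volume)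
    (x₀ : ℝ) (fplus fminus : ℂ)
    (hminus : Tendsto f (𝓝[<] x₀) (𝓝 fminus))
    (hplus : Tendsto f (𝓝[>] x₀) (𝓝 fplus)) :
    Tendsto (fun θ : ℝ => ∫ y : ℝ, (poissonKernelℝ θ y : ℂ) * f (x₀ - y))
      (𝓝[>] 0) (𝓝 ((fplus + fminus) / 2)) := by
  have ha := hminus.comp (tendsto_const_sub_nhdsGT_zero x₀)
  have hb := hplus.comp (tendsto_const_sub_nhdsLT_zero x₀)
  have hlim : Tendsto (fun θ ↦ ∫ y, poissonKernelℝ θ y • f (x₀ - y)) (𝓝[>] 0)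
      (𝓝 ((2 : ℝ)⁻¹ • (fminus + fplus))) := by
    rcases hf with hf | hf
    · exact tendsto_integral_poissonKernelℝ_smul_of_integrable (hf.comp_sub_left x₀) ha hb
    · exact tendsto_integral_poissonKernelℝ_smul_of_memLp_top
        (hf.comp_measurePreserving (Measure.measurePreserving_sub_left volume x₀)) ha hb
  convert hlim using 2 with θ
  · simp_rw [Complex.real_smul]
  · rw [Complex.real_smul, add_comm]
    push_cast
    ring
end

section
/- Fix λ ∈ (0,1) and d ≥ 1. For k = (k_1,…,k_d) ∈ {0,1}^d let J_k = ∏_{l=1}^d J_{k_l} ⊆ ℝ^d, where J_0 = (−∞,0) and J_1 = [0,∞). If f ∈ L¹(ℝ^d) or f ∈ L^∞(ℝ^d) and x ∈ ℝ^d are such that for every k ∈ {0,1}^d the limit f(x,J_k) := lim_{y→0, y∈J_k} f(x−y) exists, then lim_{θ→0⁺} (W_{θ,λ}^d * f)(x) = Σ_{k∈{0,1}^d} (∏_{j=1}^d λ^{1−k_j}(1−λ)^{k_j}) f(x,J_k). -/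
open MeasureTheory Filter Topology Real

/-- The Wigner semicircle kernel on `ℝ`: `W θ t = (2/(πθ²))√(θ² - t²)` for `-θ ≤ t ≤ θ`
and `0` otherwise. (In Lean `Real.sqrt` of a negative number is `0`, so this single formula
agrees with the piecewise definition.) -/
noncomputable def wigner (θ t : ℝ) : ℝ := 2 / (π * θ ^ 2) * Real.sqrt (θ ^ 2 - t ^ 2)

/-- The two half-lines `J_0 = (-∞,0)` and `J_1 = [0,∞)`. -/
def halfLine : Fin 2 → Set ℝ := ![Set.Iio 0, Set.Ici 0]

/-- The orthant `J_k = ∏_l J_{k_l} ⊆ ℝ^d` for `k ∈ {0,1}^d`. -/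
def orthant (d : ℕ) (k : Fin d → Fin 2) : Set (Fin d → ℝ) :=
  {y | ∀ j, y j ∈ halfLine (k j)}

/-!
Subtracting from `f` the step function equal to `f(x, J_k)` at `z` with `x - z ∈ J_k` leaves a
function that tends to `0` at `x`, and the standard approximate-identity argument applies to it:
the kernels `W_{θ,λ}^d` are nonnegative, have mass one, and their supports shrink to `0`, because
the normalisation `∫_{(-∞,0)} W_{θ,λ} = λ ∈ (0,1)` forces the shift to satisfy `|c_{θ,λ}| < θ`.
The convolution of the kernel with the step function is exactly the claimed sum for every `θ`:
the kernel is a product, so its mass on `J_k` is `∏_j λ^{1-k_j}(1-λ)^{k_j}`.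
-/

open Set Metric Function
open scoped Convolution
open ContinuousLinearMap (lsmul)

section Wigner

variable {θ c lam : ℝ}

lemma wigner_nonneg (θ t : ℝ) : 0 ≤ wigner θ t := by
  unfold wigner
  positivity

@[fun_prop]
lemma continuous_wigner (θ : ℝ) : Continuous (wigner θ) := by
  unfold wigner
  fun_prop

lemma support_wigner_subset (hθ : 0 ≤ θ) : support (wigner θ) ⊆ Ioo (-θ) θ := by
  intro t ht
  have hpos : 0 < θ ^ 2 - t ^ 2 := by
    by_contra! h
    exact ht (by simp [wigner, Real.sqrt_eq_zero'.2 h])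
  exact abs_lt.1 (abs_lt_of_sq_lt_sq (by linarith) hθ)

lemma integral_wigner (hθ : 0 < θ) : ∫ t, wigner θ t = 1 := by
  have hscale (s : ℝ) : √(θ ^ 2 - (θ * s) ^ 2) = θ * √(1 - s ^ 2) := by
    rw [show θ ^ 2 - (θ * s) ^ 2 = θ ^ 2 * (1 - s ^ 2) by ring, Real.sqrt_mul (sq_nonneg θ),
      Real.sqrt_sq hθ.le]
  have hsemicircle : ∫ t in -θ..θ, √(θ ^ 2 - t ^ 2) = θ ^ 2 * (π / 2) := by
    have := intervalIntegral.integral_comp_mul_left (fun t => √(θ ^ 2 - t ^ 2)) hθ.ne'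
      (a := -1) (b := 1)
    simp only [hscale, intervalIntegral.integral_const_mul, integral_sqrt_one_sub_sq, mul_neg,
      mul_one, smul_eq_mul] at this
    field_simp at this ⊢
    linarith
  rw [← intervalIntegral.integral_eq_integral_of_support_subset
    ((support_wigner_subset hθ.le).trans Ioo_subset_Ioc_self)]
  simp only [wigner, intervalIntegral.integral_const_mul, hsemicircle]
  field_simp

lemma integral_wigner_sub (hθ : 0 < θ) (c : ℝ) : ∫ t, wigner θ (t - c) = 1 := by
  rw [integral_sub_right_eq_self (wigner θ) c, integral_wigner hθ]

lemma integral_Iio_add_Ici_wigner_sub (hθ : 0 < θ) (c : ℝ) :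
    (∫ t in Iio 0, wigner θ (t - c)) + ∫ t in Ici 0, wigner θ (t - c) = 1 := by
  have hint : Integrable fun t => wigner θ (t - c) :=
    integrable_of_integral_eq_one (integral_wigner_sub hθ c)
  rw [intervalIntegral.integral_Iio_add_Ici hint.integrableOn hint.integrableOn,
    integral_wigner_sub hθ c]

lemma abs_lt_of_setIntegral_Iio_wigner_sub (hθ : 0 < θ) (hlam : lam ∈ Ioo 0 1)
    (hc : ∫ t in Iio 0, wigner θ (t - c) = lam) : |c| < θ := by
  have hsplit := integral_Iio_add_Ici_wigner_sub hθ c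
  have hvanish (s : Set ℝ) (hs : ∀ t ∈ s, t - c ∉ Ioo (-θ) θ) :
      ∫ t in s, wigner θ (t - c) = 0 :=
    setIntegral_eq_zero_of_forall_eq_zero fun t ht =>
      notMem_support.1 fun h => hs t ht (support_wigner_subset hθ.le h)
  rw [abs_lt]
  constructor
  · by_contra! h
    have := hvanish (Ici 0) fun t ht hmem => by linarith [hmem.2, mem_Ici.1 ht]
    linarith [hlam.2]
  · by_contra! h
    have := hvanish (Iio 0) fun t ht hmem => by linarith [hmem.1, mem_Iio.1 ht]
    linarith [hlam.1]

lemma setIntegral_halfLine_wigner_sub (hθ : 0 < θ) (hc : ∫ t in Iio 0, wigner θ (t - c) = lam)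
    (i : Fin 2) :
    ∫ t in halfLine i, wigner θ (t - c) = lam ^ (1 - (i : ℕ)) * (1 - lam) ^ (i : ℕ) := by
  have hsplit := integral_Iio_add_Ici_wigner_sub hθ c
  fin_cases i
  · simpa [halfLine] using hc
  · simp only [halfLine, Fin.isValue, Fin.mk_one, Matrix.cons_val_one, Matrix.cons_val_fin_one,
      le_refl, Nat.sub_eq_zero_of_le, pow_zero, pow_one, one_mul]
    linarith

lemma support_prod_wigner_sub_subset_closedBall {ι : Type*} [Fintype ι] (hθ : 0 < θ)
    (hc : |c| < θ) :
    support (fun y : ι → ℝ => ∏ j, wigner θ (y j - c)) ⊆ closedBall 0 (2 * θ) := by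
  intro y hy
  rw [mem_closedBall_zero_iff, pi_norm_le_iff_of_nonneg (by positivity)]
  intro j
  have hj := support_wigner_subset hθ.le fun h => hy (Finset.prod_eq_zero (Finset.mem_univ j) h)
  rw [Real.norm_eq_abs, abs_le]
  rw [abs_lt] at hc
  constructor <;> linarith [hj.1, hj.2]

end Wigner

section Orthant

variable {d : ℕ}

noncomputable def orthantIndex (y : Fin d → ℝ) : Fin d → Fin 2 :=
  fun j => if y j < 0 then 0 else 1

lemma mem_orthant_iff {k : Fin d → Fin 2} {y : Fin d → ℝ} :
    y ∈ orthant d k ↔ orthantIndex y = k := by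
  simp only [orthant, mem_ofPred_eq, funext_iff, orthantIndex]
  refine forall_congr' fun j => ?_
  generalize k j = i
  fin_cases i <;> by_cases h : y j < 0 <;> simp [halfLine, h, not_lt.1]

lemma iUnion_orthant : ⋃ k, orthant d k = univ :=
  eq_univ_of_forall fun _ => mem_iUnion.2 ⟨_, mem_orthant_iff.2 rfl⟩

lemma measurable_orthantIndex : Measurable (orthantIndex (d := d)) :=
  measurable_pi_lambda _ fun j =>
    Measurable.ite (measurableSet_lt (measurable_pi_apply j) measurable_const)
      measurable_const measurable_const

lemma measurableSet_orthant (k : Fin d → Fin 2) : MeasurableSet (orthant d k) := by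
  have : orthant d k = orthantIndex ⁻¹' {k} := by
    ext y
    exact mem_orthant_iff
  rw [this]
  exact measurable_orthantIndex (measurableSet_singleton k)

lemma setIntegral_orthant_prod (g : ℝ → ℝ) (k : Fin d → Fin 2) :
    ∫ y in orthant d k, ∏ j, g (y j) = ∏ j, ∫ t in halfLine (k j), g t := by
  have : orthant d k = univ.pi fun j => halfLine (k j) := by
    ext y
    simp [orthant]
  rw [this, volume_pi, Measure.restrict_pi_pi, integral_fintype_prod_eq_prod]

lemma tendsto_sub_orthantIndex {E : Type*} [NormedAddCommGroup E] {F : (Fin d → ℝ) → E}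
    {L : (Fin d → Fin 2) → E}
    (hL : ∀ k, Tendsto F (𝓝[orthant d k] 0) (𝓝 (L k))) :
    Tendsto (fun y => F y - L (orthantIndex y)) (𝓝 0) (𝓝 0) := by
  rw [← nhdsWithin_univ, ← iUnion_orthant, nhdsWithin_iUnion, tendsto_iSup]
  intro k
  have hindex : ∀ᶠ y in 𝓝[orthant d k] 0, F y - L k = F y - L (orthantIndex y) :=
    eventually_nhdsWithin_of_forall fun y hy => by rw [mem_orthant_iff.1 hy]
  simpa using ((hL k).sub_const (L k)).congr' hindex

variable {E : Type*} [NormedAddCommGroup E] [NormedSpace ℝ E] [CompleteSpace E]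

lemma integral_smul_orthantIndex {φ : (Fin d → ℝ) → ℝ} (hφ : Integrable φ)
    (L : (Fin d → Fin 2) → E) :
    ∫ y, φ y • L (orthantIndex y) = ∑ k, (∫ y in orthant d k, φ y) • L k := by
  have hsum (y : Fin d → ℝ) :
      φ y • L (orthantIndex y) = ∑ k, (orthant d k).indicator (fun y => φ y • L k) y := by
    rw [Finset.sum_eq_single (orthantIndex y)]
    · rw [indicator_of_mem (mem_orthant_iff.2 rfl)]
    · exact fun k _ hk => indicator_of_notMem (fun h => hk (mem_orthant_iff.1 h).symm) _
    · simp
  simp_rw [hsum]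
  rw [integral_finsetSum _ fun k _ => (hφ.smul_const (L k)).indicator (measurableSet_orthant k)]
  refine Finset.sum_congr rfl fun k _ => ?_
  rw [integral_indicator (measurableSet_orthant k), integral_smul_const]

theorem tendsto_convolution_sub_sum_orthant {ι : Type*} {l : Filter ι}
    {φ : ι → (Fin d → ℝ) → ℝ} (hφ_nonneg : ∀ᶠ i in l, ∀ y, 0 ≤ φ i y)
    (hφ_integral : ∀ᶠ i in l, ∫ y, φ i y = 1)
    (hφ_support : Tendsto (fun i => support (φ i)) l (𝓝 0).smallSets)
    (hφ_cont : ∀ᶠ i in l, Continuous (φ i)) (hφ_compact : ∀ᶠ i in l, HasCompactSupport (φ i))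
    {f : (Fin d → ℝ) → E} (hf : LocallyIntegrable f) {x : Fin d → ℝ}
    {L : (Fin d → Fin 2) → E}
    (hL : ∀ k, Tendsto (fun y => f (x - y)) (𝓝[orthant d k] 0) (𝓝 (L k))) :
    Tendsto (fun i => (φ i ⋆[lsmul ℝ ℝ] f) x - ∑ k, (∫ y in orthant d k, φ i y) • L k) l
      (𝓝 0) := by
  set step : (Fin d → ℝ) → E := fun z => L (orthantIndex (x - z))
  have hstep : LocallyIntegrable step := by
    have hmeas : StronglyMeasurable step := StronglyMeasurable.of_discrete.comp_measurable
      (measurable_orthantIndex.comp (measurable_const.sub measurable_id))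
    have hbound : ∀ᵐ z, ‖step z‖ ≤ ∑ k, ‖L k‖ := Eventually.of_forall fun _ =>
      Finset.single_le_sum (f := fun k => ‖L k‖) (fun _ _ => norm_nonneg _) (Finset.mem_univ _)
    exact (memLp_top_of_bound hmeas.aestronglyMeasurable _ hbound).locallyIntegrable le_top
  have hlim : Tendsto (fun z => f z - step z) (𝓝 x) (𝓝 0) := by
    have hsub : Tendsto (fun z => x - z) (𝓝 x) (𝓝 0) := by
      simpa using (tendsto_const_nhds (x := x)).sub (tendsto_id (x := 𝓝 x))
    simpa [Function.comp_def, step] using (tendsto_sub_orthantIndex hL).comp hsub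
  have hconv : Tendsto (fun i => (φ i ⋆[lsmul ℝ ℝ] (f - step)) x) l (𝓝 0) :=
    convolution_tendsto_right hφ_nonneg hφ_integral hφ_support
      (Eventually.of_forall fun _ => (hf.sub hstep).aestronglyMeasurable) (hlim.comp tendsto_snd)
      tendsto_const_nhds
  refine hconv.congr' ?_
  filter_upwards [hφ_cont, hφ_compact] with i hcont hcompact
  have hexists (g : (Fin d → ℝ) → E) (hg : LocallyIntegrable g) :=
    hcompact.convolutionExists_left (lsmul ℝ ℝ) hcont hg x
  have hadd := (hexists _ (hf.sub hstep)).distrib_add (hexists _ hstep)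
  rw [sub_add_cancel] at hadd
  have hstep_conv : (φ i ⋆[lsmul ℝ ℝ] step) x = ∑ k, (∫ y in orthant d k, φ i y) • L k := by
    simp only [convolution_lsmul, step, sub_sub_cancel]
    exact integral_smul_orthantIndex (hcont.integrable_of_hasCompactSupport hcompact) L
  rw [hadd, hstep_conv, add_sub_cancel_right]

end Orthant

theorem wigner_fejer_pi_general (lam : ℝ) (hlam : lam ∈ Set.Ioo (0 : ℝ) 1)
    (d : ℕ)
    (c : ℝ → ℝ)
    (hc : ∀ θ > (0 : ℝ), (∫ t in Set.Iio (0 : ℝ), wigner θ (t - c θ)) = lam)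
    (f : (Fin d → ℝ) → ℂ)
    (hf : Integrable f volume ∨ MemLp f ⊤ volume)
    (x : Fin d → ℝ) (L : (Fin d → Fin 2) → ℂ)
    (hL : ∀ k : Fin d → Fin 2,
      Tendsto (fun y => f (x - y)) (𝓝[orthant d k] 0) (𝓝 (L k))) :
    Tendsto (fun θ : ℝ => ∫ y, ((∏ j, wigner θ (y j - c θ) : ℝ) : ℂ) * f (x - y))
      (𝓝[>] 0)
      (𝓝 (∑ k : Fin d → Fin 2,
        ((∏ j, lam ^ (1 - (k j : ℕ)) * (1 - lam) ^ (k j : ℕ) : ℝ) : ℂ) * L k)) := by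
  set K : ℝ → (Fin d → ℝ) → ℝ := fun θ y => ∏ j, wigner θ (y j - c θ)
  have hpos : ∀ᶠ θ in 𝓝[>] (0 : ℝ), 0 < θ := self_mem_nhdsWithin
  have hsupport : ∀ᶠ θ in 𝓝[>] (0 : ℝ), support (K θ) ⊆ closedBall 0 (2 * θ) :=
    hpos.mono fun θ hθ => support_prod_wigner_sub_subset_closedBall hθ
      (abs_lt_of_setIntegral_Iio_wigner_sub hθ hlam (hc θ hθ))
  have hradius : Tendsto (fun θ : ℝ => 2 * θ) (𝓝[>] 0) (𝓝 0) := by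
    simpa using ((continuous_const_mul (2 : ℝ)).tendsto 0).mono_left nhdsWithin_le_nhds
  have hmain := tendsto_convolution_sub_sum_orthant (φ := K)
    (Eventually.of_forall fun θ y => Finset.prod_nonneg fun j _ => wigner_nonneg _ _)
    (hpos.mono fun θ hθ => by
      rw [integral_fintype_prod_volume_eq_pow (fun t => wigner θ (t - c θ)),
        integral_wigner_sub hθ, one_pow])
    (((tendsto_closedBall_smallSets 0).comp hradius).smallSets_mono hsupport)
    (Eventually.of_forall fun θ => by fun_prop)
    (hsupport.mono fun θ h => HasCompactSupport.intro (isCompact_closedBall 0 (2 * θ))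
      fun y hy => notMem_support.1 fun h' => hy (h h'))
    (hf.elim Integrable.locallyIntegrable (MemLp.locallyIntegrable · le_top)) hL
  rw [← tendsto_sub_nhds_zero_iff]
  refine hmain.congr' (hpos.mono fun θ hθ => ?_)
  simp only [K, convolution_lsmul, Complex.real_smul,
    setIntegral_orthant_prod (fun t => wigner θ (t - c θ)),
    setIntegral_halfLine_wigner_sub hθ (hc θ hθ)]

/-- Fejér-type theorem for the shifted Wigner semicircle kernels on `ℝ^d`: fix `λ ∈ (0,1)`
and shifts `c θ` with `∫_{(-∞,0)} W_θ(t - c θ) dt = λ`, and set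
`W_{θ,λ}(t) = W_θ(t - c θ)`, `W_{θ,λ}^d(x) = ∏_j W_{θ,λ}(x_j)`.
If `f ∈ L¹(ℝ^d)` or `f ∈ L^∞(ℝ^d)` and all `2^d` orthant limits
`f(x, J_k) = lim_{y→0, y ∈ J_k} f(x-y)` exist, then
`(W_{θ,λ}^d * f)(x) → ∑_k (∏_j λ^{1-k_j}(1-λ)^{k_j}) f(x, J_k)` as `θ → 0⁺`. -/
theorem wigner_fejer_pi (lam : ℝ) (hlam : lam ∈ Set.Ioo (0 : ℝ) 1)
    (d : ℕ) (hd : 1 ≤ d)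
    (c : ℝ → ℝ)
    (hc : ∀ θ > (0 : ℝ), (∫ t in Set.Iio (0 : ℝ), wigner θ (t - c θ)) = lam)
    (f : (Fin d → ℝ) → ℂ)
    (hf : Integrable f volume ∨ MemLp f ⊤ volume)
    (x : Fin d → ℝ) (L : (Fin d → Fin 2) → ℂ)
    (hL : ∀ k : Fin d → Fin 2,
      Tendsto (fun y => f (x - y)) (𝓝[orthant d k] 0) (𝓝 (L k))) :
    Tendsto (fun θ : ℝ => ∫ y, ((∏ j, wigner θ (y j - c θ) : ℝ) : ℂ) * f (x - y))
      (𝓝[>] 0)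
      (𝓝 (∑ k : Fin d → Fin 2,
        ((∏ j, lam ^ (1 - (k j : ℕ)) * (1 - lam) ^ (k j : ℕ) : ℝ) : ℂ) * L k)) :=
  wigner_fejer_pi_general lam hlam d c hc f hf x L hL
end

section
/- Let F be the ax+b group, realized as ℝ_{>0} × ℝ with multiplication (a,b)·(a',b') = (aa', ab'+b), identity (1,0), and left Haar measure dμ = a^{−2} da db. For 0 < θ < 1 define Φ_θ(a,b) = (a²/(πθ³))√(θ² − b²) when 1−θ < a < 1+θ and −θ ≤ b ≤ θ, and Φ_θ(a,b) = 0 otherwise. Then Φ_θ ≥ 0, ∫_F Φ_θ dμ = 1, Φ_θ is supported in [1−θ,1+θ] × [−θ,θ], so {Φ_θ}_{0<θ<1} is an approximate identity of L¹(F) as θ → 0⁺ and lim_{θ→0⁺} sup_{(a,b)∈𝒩ᶜ} |Φ_θ(a,b)| = 0 for every neighborhood 𝒩 of (1,0); moreover ∫_{A_j} Φ_θ dμ = 1/4 for j = 1,2,3,4, where A_1 = (0,1]×(−∞,0], A_2 = (0,1]×(0,∞), A_3 = (1,∞)×(−∞,0], A_4 = (1,∞)×(0,∞). -/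
open MeasureTheory Filter Topology Real

/-- The left Haar measure `a⁻² da db` of the `ax+b` group `F = ℝ_{>0} × ℝ`, realized on the
ambient space `ℝ × ℝ` by extending the density by `0` for `a ≤ 0`. -/
noncomputable def haarAffine : Measure (ℝ × ℝ) :=
  volume.withDensity fun p => if 0 < p.1 then ENNReal.ofReal ((p.1 ^ 2)⁻¹) else 0

/-- The kernel `Φ_θ(a,b) = (a²/(πθ³))√(θ² - b²)` for `1-θ < a < 1+θ`, `-θ ≤ b ≤ θ`,
and `0` otherwise. -/
noncomputable def affineKernel (θ : ℝ) (p : ℝ × ℝ) : ℝ :=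
  if 1 - θ < p.1 ∧ p.1 < 1 + θ ∧ -θ ≤ p.2 ∧ p.2 ≤ θ then
    p.1 ^ 2 / (π * θ ^ 3) * Real.sqrt (θ ^ 2 - p.2 ^ 2)
  else 0

/-- The local partition `A_1 = (0,1]×(-∞,0]`, `A_2 = (0,1]×(0,∞)`, `A_3 = (1,∞)×(-∞,0]`,
`A_4 = (1,∞)×(0,∞)` of the `ax+b` group. -/
def affinePartition : Fin 4 → Set (ℝ × ℝ) :=
  ![Set.Ioc 0 1 ×ˢ Set.Iic 0, Set.Ioc 0 1 ×ˢ Set.Ioi 0,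
    Set.Ioi 1 ×ˢ Set.Iic 0, Set.Ioi 1 ×ˢ Set.Ioi 0]

/-! Against the Haar density `a⁻²` the factor `a²` of `Φ_θ` cancels, so for `θ ≤ 1` the measure
`Φ_θ dμ` is the product `1_{(1-θ,1+θ)}(a) da ⊗ (πθ³)⁻¹ √(θ² - b²) db`. Integrals over product sets
therefore split into a length times the area of (part of) a half-disc of radius `θ`: the full
half-disc gives `2θ · πθ²/2 = πθ³`, and each of the four partition sets sees a length `θ` and a
quarter-disc `πθ²/4`. The support lies in the closed sup-ball of radius `θ` about `(1,0)`, so off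
any neighbourhood of the identity `Φ_θ` vanishes identically for small `θ`. -/

open Set
open scoped ENNReal

section Semicircle

variable {r : ℝ}

lemma sqrt_sq_sub_sq_eq_zero_of_notMem_Ioc (hr : 0 ≤ r) {x : ℝ} (hx : x ∉ Ioc (-r) r) :
    √(r ^ 2 - x ^ 2) = 0 := by
  rw [mem_Ioc, not_and_or, not_lt, not_le] at hx
  exact Real.sqrt_eq_zero'.2 (by rcases hx with hx | hx <;> nlinarith)

lemma integral_sqrt_sq_sub_sq (hr : 0 < r) :
    ∫ x in -r..r, √(r ^ 2 - x ^ 2) = π * r ^ 2 / 2 := by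
  have hscale (x : ℝ) : √(r ^ 2 - (r * x) ^ 2) = r * √(1 - x ^ 2) := by
    rw [show r ^ 2 - (r * x) ^ 2 = r ^ 2 * (1 - x ^ 2) by ring, Real.sqrt_mul (sq_nonneg r),
      Real.sqrt_sq hr.le]
  have h := intervalIntegral.integral_comp_mul_left (a := -1) (b := 1)
    (fun x => √(r ^ 2 - x ^ 2)) hr.ne'
  simp only [hscale, intervalIntegral.integral_const_mul, integral_sqrt_one_sub_sq, mul_neg,
    mul_one, smul_eq_mul] at h
  field_simp at h
  linarith

lemma integral_sqrt_sq_sub_sq_neg_zero (r : ℝ) :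
    ∫ x in -r..0, √(r ^ 2 - x ^ 2) = ∫ x in 0..r, √(r ^ 2 - x ^ 2) := by
  have h := intervalIntegral.integral_comp_neg (a := 0) (b := r) (fun x => √(r ^ 2 - x ^ 2))
  simp only [neg_sq, neg_zero] at h
  exact h.symm

lemma integral_sqrt_sq_sub_sq_zero_right (hr : 0 < r) :
    ∫ x in (0 : ℝ)..r, √(r ^ 2 - x ^ 2) = π * r ^ 2 / 4 := by
  have hint (a b : ℝ) : IntervalIntegrable (fun x => √(r ^ 2 - x ^ 2)) volume a b :=
    (by fun_prop : Continuous fun x : ℝ => √(r ^ 2 - x ^ 2)).intervalIntegrable a b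
  have h := intervalIntegral.integral_add_adjacent_intervals (hint (-r) 0) (hint 0 r)
  rw [integral_sqrt_sq_sub_sq hr, integral_sqrt_sq_sub_sq_neg_zero] at h
  linarith

lemma integral_sqrt_sq_sub_sq_eq (hr : 0 < r) :
    ∫ x, √(r ^ 2 - x ^ 2) = π * r ^ 2 / 2 := by
  rw [← setIntegral_eq_integral_of_forall_compl_eq_zero
      fun x hx => sqrt_sq_sub_sq_eq_zero_of_notMem_Ioc hr.le hx,
    ← intervalIntegral.integral_of_le (by linarith), integral_sqrt_sq_sub_sq hr]

lemma setIntegral_Iic_zero_sqrt_sq_sub_sq (hr : 0 < r) :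
    ∫ x in Iic 0, √(r ^ 2 - x ^ 2) = π * r ^ 2 / 4 := by
  rw [setIntegral_eq_of_subset_of_forall_sdiff_eq_zero measurableSet_Iic Ioc_subset_Iic_self
      fun x ⟨hx0, hx⟩ => sqrt_sq_sub_sq_eq_zero_of_notMem_Ioc hr.le fun h => hx ⟨h.1, hx0⟩,
    ← intervalIntegral.integral_of_le (by linarith), integral_sqrt_sq_sub_sq_neg_zero,
    integral_sqrt_sq_sub_sq_zero_right hr]

lemma setIntegral_Ioi_zero_sqrt_sq_sub_sq (hr : 0 < r) :
    ∫ x in Ioi 0, √(r ^ 2 - x ^ 2) = π * r ^ 2 / 4 := by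
  rw [setIntegral_eq_of_subset_of_forall_sdiff_eq_zero measurableSet_Ioi Ioc_subset_Ioi_self
      fun x ⟨hx0, hx⟩ => sqrt_sq_sub_sq_eq_zero_of_notMem_Ioc hr.le fun h =>
        hx ⟨mem_Ioi.1 hx0, h.2⟩,
    ← intervalIntegral.integral_of_le hr.le, integral_sqrt_sq_sub_sq_zero_right hr]

end Semicircle

noncomputable def haarAffineDensity (p : ℝ × ℝ) : ℝ≥0∞ :=
  if 0 < p.1 then ENNReal.ofReal ((p.1 ^ 2)⁻¹) else 0

lemma haarAffine_eq_withDensity : haarAffine = volume.withDensity haarAffineDensity := rfl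

lemma measurable_haarAffineDensity : Measurable haarAffineDensity :=
  Measurable.ite (measurableSet_lt measurable_const measurable_fst) (by fun_prop) measurable_const

lemma haarAffineDensity_lt_top (p : ℝ × ℝ) : haarAffineDensity p < ∞ := by
  unfold haarAffineDensity
  split_ifs <;> simp

section Kernel

variable {θ : ℝ}

lemma affineKernel_nonneg (hθ : 0 ≤ θ) (p : ℝ × ℝ) : 0 ≤ affineKernel θ p := by
  unfold affineKernel
  split_ifs <;> positivity

lemma support_affineKernel_subset (θ : ℝ) :
    Function.support (affineKernel θ) ⊆ Icc (1 - θ) (1 + θ) ×ˢ Icc (-θ) θ := by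
  intro p hp
  by_contra hmem
  exact hp (if_neg fun ⟨h1, h2, h3, h4⟩ => hmem ⟨⟨h1.le, h2.le⟩, h3, h4⟩)

lemma eventually_support_affineKernel_subset {N : Set (ℝ × ℝ)} (hN : N ∈ 𝓝 ((1 : ℝ), (0 : ℝ))) :
    ∀ᶠ θ in 𝓝[>] 0, Function.support (affineKernel θ) ⊆ N := by
  obtain ⟨ε, hε, hball⟩ := Metric.mem_nhds_iff.1 hN
  filter_upwards [Ioo_mem_nhdsGT hε] with θ hθ
  calc Function.support (affineKernel θ)
      _ ⊆ Icc (1 - θ) (1 + θ) ×ˢ Icc (-θ) θ := support_affineKernel_subset θ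
      _ = Metric.closedBall (1, 0) θ := by
        rw [← closedBall_prod_same, Real.closedBall_eq_Icc, Real.closedBall_eq_Icc, zero_sub,
          zero_add]
      _ ⊆ Metric.ball (1, 0) ε := Metric.closedBall_subset_ball hθ.2
      _ ⊆ N := hball

-- `√` of a negative number is `0`, so no indicator in `b` is needed on the right.
lemma haarAffineDensity_toReal_mul_affineKernel (hθ : θ ≤ 1) (p : ℝ × ℝ) :
    (haarAffineDensity p).toReal * affineKernel θ p =
      (Ioo (1 - θ) (1 + θ)).indicator 1 p.1 * (√(θ ^ 2 - p.2 ^ 2) / (π * θ ^ 3)) := by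
  obtain ⟨a, b⟩ := p
  by_cases ha : a ∈ Ioo (1 - θ) (1 + θ)
  · have ha0 : 0 < a := by linarith [ha.1]
    by_cases hb : b ∈ Icc (-θ) θ
    · have hbox : 1 - θ < a ∧ a < 1 + θ ∧ -θ ≤ b ∧ b ≤ θ := ⟨ha.1, ha.2, hb.1, hb.2⟩
      simp only [haarAffineDensity, affineKernel, if_pos ha0, if_pos hbox, indicator_of_mem ha,
        Pi.one_apply, ENNReal.toReal_ofReal (inv_nonneg.2 (sq_nonneg a))]
      field_simp
    · have hsqrt : √(θ ^ 2 - b ^ 2) = 0 :=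
        sqrt_sq_sub_sq_eq_zero_of_notMem_Ioc (by linarith [ha.1, ha.2])
          fun h => hb (Ioc_subset_Icc_self h)
      simp only [affineKernel, hsqrt, mul_zero, zero_div, ite_self]
  · have hK : affineKernel θ (a, b) = 0 := if_neg fun h => ha ⟨h.1, h.2.1⟩
    rw [hK, mul_zero, indicator_of_notMem ha, zero_mul]

lemma setIntegral_prod_affineKernel (hθ : θ ≤ 1) {s t : Set ℝ} (hs : MeasurableSet s)
    (ht : MeasurableSet t) :
    ∫ p in s ×ˢ t, affineKernel θ p ∂haarAffine =
      volume.real (s ∩ Ioo (1 - θ) (1 + θ)) * (∫ b in t, √(θ ^ 2 - b ^ 2)) / (π * θ ^ 3) := by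
  rw [haarAffine_eq_withDensity, setIntegral_withDensity_eq_setIntegral_toReal_smul
    measurable_haarAffineDensity (ae_of_all _ haarAffineDensity_lt_top) _ (hs.prod ht)]
  simp_rw [smul_eq_mul, haarAffineDensity_toReal_mul_affineKernel hθ]
  rw [Measure.volume_eq_prod, setIntegral_prod_mul ((Ioo (1 - θ) (1 + θ)).indicator 1)
    (fun b => √(θ ^ 2 - b ^ 2) / (π * θ ^ 3)), setIntegral_indicator measurableSet_Ioo,
    integral_div, mul_div_assoc]
  simp

lemma integral_affineKernel (hθ : θ ∈ Ioo 0 1) : ∫ p, affineKernel θ p ∂haarAffine = 1 := by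
  rw [← setIntegral_univ, ← univ_prod_univ, setIntegral_prod_affineKernel hθ.2.le .univ .univ,
    univ_inter, setIntegral_univ, integral_sqrt_sq_sub_sq_eq hθ.1,
    volume_real_Ioo_of_le (by linarith [hθ.1])]
  have hθ0 := hθ.1.ne'
  field_simp
  ring

lemma setIntegral_affinePartition (hθ : θ ∈ Ioo 0 1) (j : Fin 4) :
    ∫ p in affinePartition j, affineKernel θ p ∂haarAffine = 1 / 4 := by
  obtain ⟨hθ0, hθ1⟩ := hθ
  have hleft : volume.real (Ioc 0 1 ∩ Ioo (1 - θ) (1 + θ)) = θ := by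
    rw [Ioc_inter_Ioo_of_left_lt (by linarith), max_eq_right (by linarith),
      volume_real_Ioc_of_le (by linarith)]
    ring
  have hright : volume.real (Ioi 1 ∩ Ioo (1 - θ) (1 + θ)) = θ := by
    rw [← Ioi_inter_Iio, ← inter_assoc, Ioi_inter_Ioi, max_eq_left (by linarith), Ioi_inter_Iio,
      volume_real_Ioo_of_le (by linarith)]
    ring
  have hquarter : θ * (π * θ ^ 2 / 4) / (π * θ ^ 3) = 1 / 4 := by
    field_simp
  fin_cases j <;>
    simp only [affinePartition, Fin.zero_eta, Fin.mk_one, Fin.reduceFinMk, Matrix.cons_val] <;>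
    rw [setIntegral_prod_affineKernel hθ1.le (by measurability) (by measurability)] <;>
    simp only [hleft, hright, setIntegral_Iic_zero_sqrt_sq_sub_sq hθ0,
      setIntegral_Ioi_zero_sqrt_sq_sub_sq hθ0, hquarter]

end Kernel

/-- `{Φ_θ}_{0<θ<1}` is an approximate identity of `L¹(F)` of the `ax+b` group `F`
(with identity `(1,0)` and left Haar measure `a⁻² da db`): each `Φ_θ` is nonnegative,
integrable with total integral `1`, supported in `[1-θ,1+θ] × [-θ,θ]`, satisfies
`∫_{A_j} Φ_θ dμ = 1/4` for the four sets of the local partition, and as `θ → 0⁺` both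
`∫_{𝒩ᶜ} |Φ_θ| dμ → 0` and `sup_{𝒩ᶜ} |Φ_θ| → 0` (the latter in `ε`-form) for every
neighborhood `𝒩` of `(1,0)`. -/
theorem affineKernel_approximate_identity :
    (∀ θ ∈ Set.Ioo (0 : ℝ) 1,
      (∀ p : ℝ × ℝ, 0 ≤ affineKernel θ p) ∧
      Integrable (affineKernel θ) haarAffine ∧
      (∫ p, affineKernel θ p ∂haarAffine) = 1 ∧
      Function.support (affineKernel θ) ⊆ Set.Icc (1 - θ) (1 + θ) ×ˢ Set.Icc (-θ) θ ∧
      (∀ j : Fin 4, (∫ p in affinePartition j, affineKernel θ p ∂haarAffine) = 1/4)) ∧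
    (∀ N ∈ 𝓝 ((1 : ℝ), (0 : ℝ)),
      Tendsto (fun θ : ℝ => ∫ p in Nᶜ, |affineKernel θ p| ∂haarAffine) (𝓝[>] 0) (𝓝 0)) ∧
    (∀ N ∈ 𝓝 ((1 : ℝ), (0 : ℝ)), ∀ ε > (0 : ℝ),
      ∀ᶠ θ : ℝ in 𝓝[>] 0, ∀ p ∈ Nᶜ, |affineKernel θ p| ≤ ε) := by
  have tail_eq_zero (N) (hN : N ∈ 𝓝 ((1 : ℝ), (0 : ℝ))) :
      ∀ᶠ θ in 𝓝[>] 0, ∀ p ∈ Nᶜ, |affineKernel θ p| = 0 :=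
    (eventually_support_affineKernel_subset hN).mono fun θ hθ p hp =>
      abs_eq_zero.2 (Function.notMem_support.1 fun h => hp (hθ h))
  refine ⟨fun θ hθ => ⟨affineKernel_nonneg hθ.1.le, ?_, integral_affineKernel hθ,
    support_affineKernel_subset θ, setIntegral_affinePartition hθ⟩, fun N hN => ?_,
    fun N hN ε hε => ?_⟩
  · -- a non-integrable function has Bochner integral `0`
    exact .of_integral_ne_zero (by rw [integral_affineKernel hθ]; exact one_ne_zero)
  · exact tendsto_const_nhds.congr' ((tail_eq_zero N hN).mono fun θ hθ =>
      (setIntegral_eq_zero_of_forall_eq_zero hθ).symm)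
  · exact (tail_eq_zero N hN).mono fun θ hθ p hp => (hθ p hp).trans_le hε.le
end
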